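/- Let k > 1 be an integer. Suppose g₁, g₂ : ℍ → ℂ are holomorphic, satisfy gᵢ((aτ+b)/(cτ+d)) = (cτ+d)^{2−2k} gᵢ(τ) for all [[a,b],[c,d]] ∈ SL₂(ℤ) (i = 1,2), and admit Fourier expansions gᵢ(τ) = Σ_{n≥−Nᵢ} cᵢ(n) e(nτ) (absolutely convergent on ℍ) for some Nᵢ ∈ ℕ. If c₁(−m) = c₂(−m) for every integer m ≥ 1, then g₁ = g₂. -/

import Mathlib

noncomputable section

open Complex Real

/-- The upper half-plane, as a subset of `ℂ`. -/
def UHP : Set ℂ := {z : ℂ | 0 < z.im}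

/-- `e(z) = exp(2πiz)`. -/
def e (z : ℂ) : ℂ := Complex.exp (2 * (π : ℂ) * I * z)

/-!
The difference `h = g₁ - g₂` has weight `-2p` with `p = k - 1 ≥ 1`, and by hypothesis its
Fourier expansion has no terms `e(nτ)` with `n < 0`. Hence `h` is bounded on `Im τ ≥ √3/2`, which
contains the standard fundamental domain; since `‖h τ‖ / (Im τ)^p` is `SL₂(ℤ)`-invariant, this
gives `‖h τ‖ ≤ C (Im τ)^p` on all of `ℍ`. A Fourier coefficient is bounded by the sup norm on a
horizontal line, so `|c(n)| e^{-2πny} ≤ C y^p` for every `y > 0`, and `y → 0` forces `c(n) = 0`.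
-/

open Filter Topology
open scoped MatrixGroups

def HasFourierExpansion (c : ℤ → ℂ) (h : ℂ → ℂ) : Prop :=
  ∀ τ ∈ UHP, HasSum (fun n : ℤ => c n * e (n * τ)) (h τ)

def TransformsWithWeight (w : ℤ) (h : ℂ → ℂ) : Prop :=
  ∀ γ : SL(2, ℤ), ∀ τ ∈ UHP,
    h (((γ.1 0 0 : ℂ) * τ + (γ.1 0 1 : ℂ)) / ((γ.1 1 0 : ℂ) * τ + (γ.1 1 1 : ℂ)))
      = ((γ.1 1 0 : ℂ) * τ + (γ.1 1 1 : ℂ)) ^ w * h τ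

lemma HasFourierExpansion.sub {c₁ c₂ : ℤ → ℂ} {g₁ g₂ : ℂ → ℂ} (h₁ : HasFourierExpansion c₁ g₁)
    (h₂ : HasFourierExpansion c₂ g₂) : HasFourierExpansion (c₁ - c₂) (g₁ - g₂) := fun τ hτ => by
  simpa [sub_mul] using (h₁ τ hτ).sub (h₂ τ hτ)

lemma TransformsWithWeight.sub {w : ℤ} {g₁ g₂ : ℂ → ℂ} (h₁ : TransformsWithWeight w g₁)
    (h₂ : TransformsWithWeight w g₂) : TransformsWithWeight w (g₁ - g₂) := fun γ τ hτ => by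
  simp [h₁ γ τ hτ, h₂ γ τ hτ, mul_sub]

lemma norm_e (z : ℂ) : ‖e z‖ = Real.exp (-(2 * π * z.im)) := by
  simp [e, Complex.norm_exp, Complex.mul_re]

lemma e_add (a b : ℂ) : e (a + b) = e a * e b := by
  rw [e, e, e, ← Complex.exp_add]; ring_nf

lemma sum_range_e_mul_div (M : ℕ) (hM : M ≠ 0) (d : ℤ) :
    ∑ j ∈ Finset.range M, e (d * j / M) = if (M : ℤ) ∣ d then (M : ℂ) else 0 := by
  have hζ := Complex.isPrimitiveRoot_exp M hM
  set ζ := Complex.exp (2 * π * I / M) ^ d with hζdef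
  have hpow (j : ℕ) : e (d * j / M) = ζ ^ j := by
    rw [hζdef, ← Complex.exp_int_mul, ← Complex.exp_nat_mul, e]
    ring_nf
  simp_rw [hpow]
  split_ifs with hdvd
  · simp [ζ, (hζ.zpow_eq_one_iff_dvd d).2 hdvd]
  · have hζ1 : ζ ≠ 1 := fun h => hdvd ((hζ.zpow_eq_one_iff_dvd d).1 h)
    have hζM : ζ ^ M = 1 := by
      rw [hζdef, ← zpow_natCast, ← zpow_mul, mul_comm d, zpow_mul, zpow_natCast, hζ.pow_eq_one,
        one_zpow]
    rw [geom_sum_eq hζ1, hζM, sub_self, zero_div]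

lemma eventually_not_natCast_dvd {d : ℤ} (hd : d ≠ 0) : ∀ᶠ M : ℕ in atTop, ¬ (M : ℤ) ∣ d := by
  filter_upwards [eventually_gt_atTop d.natAbs] with M hM hdvd
  exact hM.not_ge (Nat.le_of_dvd (Int.natAbs_pos.2 hd) (Int.natCast_dvd.1 hdvd))

section FourierCoefficients

variable {c : ℤ → ℂ} {h : ℂ → ℂ} {τ : ℂ}

lemma hasSum_average_mul_e
    (hsum : ∀ x : ℝ, HasSum (fun m : ℤ => c m * e (m * (τ + x))) (h (τ + x)))
    (n : ℤ) {M : ℕ} (hM : M ≠ 0) :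
    HasSum (fun m : ℤ => if (M : ℤ) ∣ m - n then c m * e (m * τ) else 0)
      ((M : ℂ)⁻¹ * ∑ j ∈ Finset.range M, e (-n * j / M) * h (τ + (j / M : ℝ))) := by
  refine .congr_fun ((hasSum_sum fun (j : ℕ) _ => (hsum (j / M)).mul_left (e (-n * j / M))).mul_left
    (M : ℂ)⁻¹) fun m => ?_
  have hterm (j : ℕ) : e (-n * j / M) * (c m * e (m * (τ + (j / M : ℝ)))) =
      c m * e (m * τ) * e ((m - n : ℤ) * j / M) := by
    rw [mul_left_comm, ← e_add, mul_assoc, ← e_add]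
    push_cast
    ring_nf
  simp_rw [hterm, ← Finset.mul_sum, sum_range_e_mul_div M hM]
  split_ifs
  · field_simp
  · simp

lemma norm_average_mul_e_le {B : ℝ} (hB : ∀ x : ℝ, ‖h (τ + x)‖ ≤ B) (n : ℤ) {M : ℕ}
    (hM : M ≠ 0) :
    ‖(M : ℂ)⁻¹ * ∑ j ∈ Finset.range M, e (-n * j / M) * h (τ + (j / M : ℝ))‖ ≤ B := by
  have hterm (j : ℕ) : ‖e (-n * j / M) * h (τ + (j / M : ℝ))‖ ≤ B := by
    rw [norm_mul, norm_e]
    simpa [Complex.div_im] using hB (j / M)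
  calc _ ≤ (M : ℝ)⁻¹ * ∑ j ∈ Finset.range M, ‖e (-n * j / M) * h (τ + (j / M : ℝ))‖ := by
        rw [norm_mul, norm_inv, Complex.norm_natCast]
        gcongr
        exact norm_sum_le _ _
    _ ≤ (M : ℝ)⁻¹ * ∑ _j ∈ Finset.range M, B := by gcongr with j; exact hterm j
    _ = B := by simp [field]

/-- Averaging `h · e(-n ·)` over the points `τ + j / M`, `j < M`, keeps exactly the terms with
`m ≡ n [ZMOD M]`; as `M → ∞` only `m = n` survives, by dominated convergence. -/
lemma norm_coeff_mul_e_le {B : ℝ}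
    (hsum : ∀ x : ℝ, HasSum (fun m : ℤ => c m * e (m * (τ + x))) (h (τ + x)))
    (hB : ∀ x : ℝ, ‖h (τ + x)‖ ≤ B) (n : ℤ) : ‖c n * e (n * τ)‖ ≤ B := by
  have hsummable : Summable fun m : ℤ => ‖c m * e (m * τ)‖ := by
    simpa using (hsum 0).summable.norm
  have hterm (m : ℤ) : Tendsto (fun M : ℕ => if (M : ℤ) ∣ m - n then c m * e (m * τ) else 0)
      atTop (𝓝 (if m = n then c n * e (n * τ) else 0)) := by
    rcases eq_or_ne m n with rfl | hmn
    · simp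
    · simp only [if_neg hmn]
      refine tendsto_const_nhds.congr' ?_
      filter_upwards [eventually_not_natCast_dvd (sub_ne_zero.2 hmn)] with M hM
      simp [hM]
  have hbound : ∀ᶠ M : ℕ in atTop, ∀ m : ℤ,
      ‖if (M : ℤ) ∣ m - n then c m * e (m * τ) else 0‖ ≤ ‖c m * e (m * τ)‖ :=
    .of_forall fun M m => by split_ifs <;> simp only [le_refl, norm_zero, norm_nonneg]
  have hlim := tendsto_tsum_of_dominated_convergence hsummable hterm hbound
  rw [tsum_ite_eq] at hlim
  refine le_of_tendsto hlim.norm ?_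
  filter_upwards [eventually_ne_atTop 0] with M hM
  rw [(hasSum_average_mul_e hsum n hM).tsum_eq]
  exact norm_average_mul_e_le hB n hM

end FourierCoefficients

lemma coeff_eq_zero_of_norm_le_mul_im_pow {c : ℤ → ℂ} {h : ℂ → ℂ} {C : ℝ} {p : ℕ} (hp : p ≠ 0)
    (hsum : HasFourierExpansion c h)
    (hbd : ∀ τ ∈ UHP, ‖h τ‖ ≤ C * τ.im ^ p) (n : ℤ) : c n = 0 := by
  have hline {y : ℝ} (hy : 0 < y) (x : ℝ) : y * I + x ∈ UHP := by simpa [UHP] using hy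
  have hcoeff {y : ℝ} (hy : 0 < y) : ‖c n‖ * Real.exp (-(2 * π * (n * y))) ≤ C * y ^ p := by
    have := norm_coeff_mul_e_le (fun x => hsum _ (hline hy x))
      (fun x => by simpa using hbd _ (hline hy x)) n
    simpa [norm_mul, norm_e] using this
  have hlhs : Tendsto (fun y : ℝ => ‖c n‖ * Real.exp (-(2 * π * (n * y)))) (𝓝[>] 0)
      (𝓝 ‖c n‖) := by
    have : Continuous fun y : ℝ => ‖c n‖ * Real.exp (-(2 * π * (n * y))) := by fun_prop
    simpa using this.tendsto 0 |>.mono_left nhdsWithin_le_nhds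
  have hrhs : Tendsto (fun y : ℝ => C * y ^ p) (𝓝[>] 0) (𝓝 0) := by
    have : Continuous fun y : ℝ => C * y ^ p := by fun_prop
    simpa [hp] using this.tendsto 0 |>.mono_left nhdsWithin_le_nhds
  have hle : ‖c n‖ ≤ 0 :=
    le_of_tendsto_of_tendsto hlhs hrhs (eventually_nhdsWithin_of_forall fun y hy => hcoeff hy)
  exact norm_le_zero_iff.1 hle

lemma norm_le_tsum_of_coeff_neg_eq_zero {c : ℤ → ℂ} {h : ℂ → ℂ}
    (hsum : HasFourierExpansion c h)
    (hneg : ∀ m < 0, c m = 0) {τ₀ τ : ℂ} (hτ₀ : τ₀ ∈ UHP) (hτ : τ ∈ UHP) (hle : τ₀.im ≤ τ.im) :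
    ‖h τ‖ ≤ ∑' m : ℤ, ‖c m * e (m * τ₀)‖ := by
  have hterm (m : ℤ) : ‖c m * e (m * τ)‖ ≤ ‖c m * e (m * τ₀)‖ := by
    rcases lt_or_ge m 0 with hm | hm
    · simp [hneg m hm]
    · simp only [norm_mul, norm_e, Complex.mul_im, Complex.intCast_re, Complex.intCast_im, zero_mul,
        add_zero]
      gcongr
  rw [← (hsum τ hτ).tsum_eq]
  exact (norm_tsum_le_tsum_norm (hsum τ hτ).summable.norm).trans
    ((hsum τ hτ).summable.norm.tsum_le_tsum hterm (hsum τ₀ hτ₀).summable.norm)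

section Modular

open UpperHalfPlane ModularGroup
open scoped Modular

lemma sqrt_three_div_two_le_im_of_mem_fd {z : ℍ} (hz : z ∈ 𝒟) : √3 / 2 ≤ z.im := by
  have h34 := three_le_four_mul_im_sq_of_mem_fd hz
  have := z.im_pos
  rw [div_le_iff₀ two_pos, Real.sqrt_le_left (by positivity)]
  nlinarith

variable {h : ℂ → ℂ} {p : ℕ}

lemma coe_specialLinearGroup_smul (γ : SL(2, ℤ)) (z : ℍ) :
    ((γ • z : ℍ) : ℂ) =
      ((γ.1 0 0 : ℂ) * z + (γ.1 0 1 : ℂ)) / ((γ.1 1 0 : ℂ) * z + (γ.1 1 1 : ℂ)) := by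
  rw [coe_specialLinearGroup_apply]
  simp

lemma norm_div_im_pow_smul (htrans : TransformsWithWeight (-(2 * p)) h)
    (γ : SL(2, ℤ)) (z : ℍ) : ‖h (γ • z : ℍ)‖ / (γ • z).im ^ p = ‖h z‖ / z.im ^ p := by
  have hD : ‖denom γ z‖ ≠ 0 := norm_ne_zero_iff.2 (denom_ne_zero γ z)
  have hz := z.im_pos.ne'
  rw [coe_specialLinearGroup_smul, htrans γ z z.im_pos, ModularGroup.im_smul_eq_div_normSq,
    Complex.normSq_eq_norm_sq, ← ModularGroup.denom_apply, norm_mul, norm_zpow,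
    show (-(2 * p : ℤ)) = -((2 * p : ℕ) : ℤ) by push_cast; ring, zpow_neg, zpow_natCast, pow_mul,
    div_pow]
  field_simp

lemma norm_le_mul_im_pow_of_smul_invariant (htrans : TransformsWithWeight (-(2 * p)) h)
    {B : ℝ} (hB : ∀ τ ∈ UHP, √3 / 2 ≤ τ.im → ‖h τ‖ ≤ B) (τ : ℂ) (hτ : τ ∈ UHP) :
    ‖h τ‖ ≤ B / (√3 / 2) ^ p * τ.im ^ p := by
  let z : ℍ := ⟨τ, hτ⟩
  obtain ⟨γ, hγ⟩ := exists_smul_mem_fd z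
  have hw : ‖h (γ • z : ℍ)‖ ≤ B := hB _ (γ • z).im_pos (sqrt_three_div_two_le_im_of_mem_fd hγ)
  rw [← div_le_iff₀ (pow_pos (show 0 < τ.im from hτ) p)]
  calc ‖h τ‖ / τ.im ^ p = ‖h (γ • z : ℍ)‖ / (γ • z).im ^ p :=
        (norm_div_im_pow_smul htrans γ z).symm
    _ ≤ B / (√3 / 2) ^ p := by
      gcongr
      · exact (norm_nonneg _).trans hw
      · exact sqrt_three_div_two_le_im_of_mem_fd hγ

end Modular

theorem stmt1 (k : ℤ) (hk : 1 < k) (g₁ g₂ : ℂ → ℂ) (c₁ c₂ : ℤ → ℂ)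
    (htrans₁ : ∀ γ : Matrix.SpecialLinearGroup (Fin 2) ℤ, ∀ τ ∈ UHP,
      g₁ (((γ.1 0 0 : ℂ) * τ + (γ.1 0 1 : ℂ)) / ((γ.1 1 0 : ℂ) * τ + (γ.1 1 1 : ℂ)))
        = ((γ.1 1 0 : ℂ) * τ + (γ.1 1 1 : ℂ)) ^ (2 - 2 * k) * g₁ τ)
    (htrans₂ : ∀ γ : Matrix.SpecialLinearGroup (Fin 2) ℤ, ∀ τ ∈ UHP,
      g₂ (((γ.1 0 0 : ℂ) * τ + (γ.1 0 1 : ℂ)) / ((γ.1 1 0 : ℂ) * τ + (γ.1 1 1 : ℂ)))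
        = ((γ.1 1 0 : ℂ) * τ + (γ.1 1 1 : ℂ)) ^ (2 - 2 * k) * g₂ τ)
    (hsum₁ : ∀ τ ∈ UHP, HasSum (fun n : ℤ => c₁ n * e ((n : ℂ) * τ)) (g₁ τ))
    (hsum₂ : ∀ τ ∈ UHP, HasSum (fun n : ℤ => c₂ n * e ((n : ℂ) * τ)) (g₂ τ))
    (hprin : ∀ m : ℕ, 1 ≤ m → c₁ (-(m : ℤ)) = c₂ (-(m : ℤ))) :
    ∀ τ ∈ UHP, g₁ τ = g₂ τ := by
  obtain ⟨p, rfl⟩ : ∃ p : ℕ, k = p + 1 := ⟨(k - 1).toNat, by omega⟩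
  have htrans : TransformsWithWeight (-(2 * p)) (g₁ - g₂) := by
    rw [show -(2 * (p : ℤ)) = 2 - 2 * (p + 1) by ring]
    exact TransformsWithWeight.sub htrans₁ htrans₂
  have hsum := HasFourierExpansion.sub hsum₁ hsum₂
  have hneg (m : ℤ) (hm : m < 0) : (c₁ - c₂) m = 0 := by
    obtain ⟨n, rfl⟩ : ∃ n : ℕ, m = -n := ⟨m.natAbs, by omega⟩
    simp [hprin n (by omega)]
  have hτ₀ : ((√3 / 2 : ℝ) * I : ℂ) ∈ UHP := by simp [UHP]
  have hbound := norm_le_mul_im_pow_of_smul_invariant htrans fun τ hτ hle =>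
    norm_le_tsum_of_coeff_neg_eq_zero hsum hneg hτ₀ hτ (by simpa using hle)
  have hc := coeff_eq_zero_of_norm_le_mul_im_pow (by omega) hsum hbound
  intro τ hτ
  exact sub_eq_zero.1 <| (hsum τ hτ).unique (by simp [hc])
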